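/- arXiv:2509.23209 — 6 statements merged into one kernel-verified Lean document; each statement's English description precedes it below -/
import Mathlib

section
/- Let I be a finite type with a distinguished element i₀ and at least one other element. Let L : I → ℝ with L i > 0 for all i (the context likelihoods P(C|π_i)), let J : I → ℝ (the true returns of the source policies), let Ĵ ∈ ℝ (the return J(π_C*) of the estimated context-optimal policy), let β > 0, and set d* = |Ĵ − J i₀|. Suppose there is d_J > 0 with J i₀ − J i ≥ d_J for every i ≠ i₀, and suppose d_J − 2·d* > 0. Define the value likelihoods v i = exp(−β·|Ĵ − J i|). Then the value-informed posterior strictly exceeds the baseline posterior: (v i₀ · L i₀) / (Σ_{i∈I} v i · L i) > L i₀ / (Σ_{i∈I} L i). -/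
/-- Core of Theorem 1 (Improved Performance Bound): in the finite Bayesian
mixture model, conditioning on the Context Value strictly increases the
posterior probability of the optimal source policy. -/
theorem value_informed_posterior_gt_baseline
    {I : Type*} [Fintype I] (i₀ : I) (hI : ∃ i : I, i ≠ i₀)
    (L : I → ℝ) (hL : ∀ i, 0 < L i) (J : I → ℝ) (Jhat : ℝ) (β : ℝ) (hβ : 0 < β)
    (dJ : ℝ) (hdJ : 0 < dJ) (hgap : ∀ i, i ≠ i₀ → dJ ≤ J i₀ - J i)
    (hsmall : 0 < dJ - 2 * |Jhat - J i₀|)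
    (v : I → ℝ) (hv : ∀ i, v i = Real.exp (-β * |Jhat - J i|)) :
    L i₀ / (∑ i, L i) < (v i₀ * L i₀) / (∑ i, v i * L i) := by
  have hvpos : ∀ i, 0 < v i := fun i => by rw [hv]; exact Real.exp_pos _
  -- v i < v i₀ for i ≠ i₀
  have hvlt : ∀ i, i ≠ i₀ → v i < v i₀ := by
    intro i hi
    rw [hv, hv]
    apply Real.exp_lt_exp.mpr
    have h1 : dJ ≤ J i₀ - J i := hgap i hi
    have htri : |J i₀ - J i| - |J i₀ - Jhat| ≤ |Jhat - J i| := by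
      have := abs_sub_abs_le_abs_sub (J i₀ - J i) (J i₀ - Jhat)
      have he : (J i₀ - J i) - (J i₀ - Jhat) = Jhat - J i := by ring
      rwa [he] at this
    have hcomm : |J i₀ - Jhat| = |Jhat - J i₀| := abs_sub_comm _ _
    have h2 : |Jhat - J i₀| < |Jhat - J i| := by
      have hla : J i₀ - J i ≤ |J i₀ - J i| := le_abs_self _
      nlinarith
    nlinarith
  obtain ⟨j, hj⟩ := hI
  have hsumL : 0 < ∑ i, L i := Finset.sum_pos (fun i _ => hL i) ⟨i₀, Finset.mem_univ i₀⟩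
  have hsumvL : 0 < ∑ i, v i * L i :=
    Finset.sum_pos (fun i _ => mul_pos (hvpos i) (hL i)) ⟨i₀, Finset.mem_univ i₀⟩
  have key : ∑ i, v i * L i < v i₀ * ∑ i, L i := by
    rw [Finset.mul_sum]
    refine Finset.sum_lt_sum (fun i _ => ?_)
      ⟨j, Finset.mem_univ j, mul_lt_mul_of_pos_right (hvlt j hj) (hL j)⟩
    rcases eq_or_ne i i₀ with h | h
    · rw [h]
    · exact le_of_lt (mul_lt_mul_of_pos_right (hvlt i h) (hL i))
  rw [div_lt_div_iff₀ hsumL hsumvL]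
  nlinarith [hL i₀, key]
end

section
/- Let I be a finite type with a distinguished element i₀ and at least one other element, L : I → ℝ with L i > 0, J : I → ℝ, Ĵ ∈ ℝ, β > 0, d* = |Ĵ − J i₀|, and d_J > 0 with J i₀ − J i ≥ d_J for all i ≠ i₀ and d_J − 2·d* > 0. Define v i = exp(−β·|Ĵ − J i|), P_V = (v i₀ · L i₀)/(Σ_i v i · L i) and P_base = L i₀/(Σ_i L i). Then for every k ≥ 0, every r_max > 0 and every γ ∈ [0,1), the value-informed upper bound is strictly tighter than the baseline upper bound: (2·r_max/(1−γ)²)·(1 − P_V + k) < (2·r_max/(1−γ)²)·(1 − P_base + k). -/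
/-- Theorem 1 (Improved Performance Bound): the value-informed upper bound
D_V = (2 r_max/(1-γ)²)(1 - P_V + k) is strictly tighter than the baseline
bound D_base = (2 r_max/(1-γ)²)(1 - P_base + k). -/
theorem improved_performance_bound
    {I : Type*} [Fintype I] (i₀ : I) (hI : ∃ i : I, i ≠ i₀)
    (L : I → ℝ) (hL : ∀ i, 0 < L i) (J : I → ℝ) (Jhat : ℝ) (β : ℝ) (hβ : 0 < β)
    (dJ : ℝ) (hdJ : 0 < dJ) (hgap : ∀ i, i ≠ i₀ → dJ ≤ J i₀ - J i)
    (hsmall : 0 < dJ - 2 * |Jhat - J i₀|)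
    (v : I → ℝ) (hv : ∀ i, v i = Real.exp (-β * |Jhat - J i|))
    (P_V P_base : ℝ)
    (hPV : P_V = (v i₀ * L i₀) / (∑ i, v i * L i))
    (hPbase : P_base = L i₀ / (∑ i, L i))
    (k : ℝ) (hk : 0 ≤ k) (r_max : ℝ) (hr : 0 < r_max)
    (γ : ℝ) (hγ0 : 0 ≤ γ) (hγ1 : γ < 1) :
    (2 * r_max / (1 - γ) ^ 2) * (1 - P_V + k) <
      (2 * r_max / (1 - γ) ^ 2) * (1 - P_base + k) := by
  have hvpos : ∀ i, 0 < v i := fun i => (hv i) ▸ Real.exp_pos _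
  have hvlt : ∀ i, i ≠ i₀ → v i < v i₀ := by
    intro i hi
    rw [hv i, hv i₀]
    apply Real.exp_lt_exp.mpr
    have h1 : |Jhat - J i₀| < |Jhat - J i| := by
      have h2 : dJ ≤ J i₀ - J i := hgap i hi
      have h3 : |J i₀ - J i| - |Jhat - J i₀| ≤ |Jhat - J i| := by
        have htri := abs_sub_le (J i₀) Jhat (J i)
        have hcm : |J i₀ - Jhat| = |Jhat - J i₀| := abs_sub_comm _ _
        linarith
      have h4 : dJ ≤ |J i₀ - J i| := le_trans h2 (le_abs_self _)
      linarith
    nlinarith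
  have hSpos : 0 < ∑ i, L i := Finset.sum_pos (fun i _ => hL i) ⟨i₀, Finset.mem_univ i₀⟩
  have hSVpos : 0 < ∑ i, v i * L i :=
    Finset.sum_pos (fun i _ => mul_pos (hvpos i) (hL i)) ⟨i₀, Finset.mem_univ i₀⟩
  have hPlt : P_base < P_V := by
    rw [hPV, hPbase, div_lt_div_iff₀ hSpos hSVpos]
    have : ∑ i, L i₀ * (v i * L i) < ∑ i, v i₀ * L i₀ * L i := by
      apply Finset.sum_lt_sum
      · intro i _
        rcases eq_or_ne i i₀ with rfl | hi
        · ring_nf; exact le_refl _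
        · have := hvlt i hi
          nlinarith [mul_pos (hL i₀) (hL i)]
      · obtain ⟨j, hj⟩ := hI
        refine ⟨j, Finset.mem_univ j, ?_⟩
        have := hvlt j hj
        nlinarith [mul_pos (hL i₀) (hL j)]
      
    calc L i₀ * ∑ i, v i * L i = ∑ i, L i₀ * (v i * L i) := Finset.mul_sum _ _ _
      _ < ∑ i, v i₀ * L i₀ * L i := this
      _ = v i₀ * L i₀ * ∑ i, L i := (Finset.mul_sum _ _ _).symm
  have h1γ : 0 < 1 - γ := by linarith
  have hc : 0 < 2 * r_max / (1 - γ) ^ 2 := by positivity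
  have : 1 - P_V + k < 1 - P_base + k := by linarith
  exact mul_lt_mul_of_pos_left this hc
end

section
/- Let I be a finite type with a distinguished element i₀ and at least one other element, L : I → ℝ with L i > 0, J : I → ℝ, Ĵ ∈ ℝ, β > 0, d* = |Ĵ − J i₀|, and suppose there is d_J > 0 with J i₀ − J i ≥ d_J for all i ≠ i₀ and d_J − 2·d* > 0. Define v i = exp(−β·|Ĵ − J i|), Γ_min = exp(β·(d_J − 2·d*)), S* = L i₀, S_other = Σ_{i≠i₀} L i, and δ_rel = S_other·(Γ_min − 1)/(S*·Γ_min + S_other). Then δ_rel > 0 and ((v i₀ · L i₀)/(Σ_i v i · L i)) / (L i₀/(Σ_i L i)) ≥ 1 + δ_rel. -/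
/-- Lemma 2 (Comparison of two upper bounds): the value-informed posterior
exceeds the baseline posterior by a factor of at least 1 + δ_rel, with
δ_rel > 0, whenever d_J > 2 d*. -/
theorem posterior_ratio_ge_one_add_delta_rel
    {I : Type*} [Fintype I] [DecidableEq I] (i₀ : I) (hI : ∃ i : I, i ≠ i₀)
    (L : I → ℝ) (hL : ∀ i, 0 < L i) (J : I → ℝ) (Jhat : ℝ) (β : ℝ) (hβ : 0 < β)
    (dJ : ℝ) (hdJ : 0 < dJ) (hgap : ∀ i, i ≠ i₀ → dJ ≤ J i₀ - J i)
    (hsmall : 0 < dJ - 2 * |Jhat - J i₀|)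
    (v : I → ℝ) (hv : ∀ i, v i = Real.exp (-β * |Jhat - J i|))
    (Γmin Sstar Sother δrel : ℝ)
    (hΓ : Γmin = Real.exp (β * (dJ - 2 * |Jhat - J i₀|)))
    (hS : Sstar = L i₀)
    (hSo : Sother = ∑ i ∈ Finset.univ.erase i₀, L i)
    (hδ : δrel = Sother * (Γmin - 1) / (Sstar * Γmin + Sother)) :
    0 < δrel ∧
      1 + δrel ≤ ((v i₀ * L i₀) / (∑ i, v i * L i)) / (L i₀ / (∑ i, L i)) := by
  obtain ⟨j, hj⟩ := hI
  have hΓpos : 0 < Γmin := hΓ ▸ Real.exp_pos _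
  have hΓ1 : 1 < Γmin := by
    rw [hΓ]
    have : (0:ℝ) < β * (dJ - 2 * |Jhat - J i₀|) := mul_pos hβ hsmall
    calc (1:ℝ) = Real.exp 0 := Real.exp_zero.symm
    _ < _ := Real.exp_lt_exp.mpr this
  have hSopos : 0 < Sother := by
    rw [hSo]
    exact Finset.sum_pos (fun i _ => hL i)
      ⟨j, Finset.mem_erase.mpr ⟨hj, Finset.mem_univ j⟩⟩
  have hSstar : 0 < Sstar := hS ▸ hL i₀
  have hden : 0 < Sstar * Γmin + Sother := add_pos (mul_pos hSstar hΓpos) hSopos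
  have hden2 : 0 < L i₀ * Γmin + Sother := by rw [hS] at hden; exact hden
  have hδpos : 0 < δrel := by
    rw [hδ]
    exact div_pos (mul_pos hSopos (by linarith)) hden
  refine ⟨hδpos, ?_⟩
  have hvpos : ∀ i, 0 < v i := fun i => (hv i) ▸ Real.exp_pos _
  have hT : 0 < ∑ i, L i := Finset.sum_pos (fun i _ => hL i) ⟨i₀, Finset.mem_univ i₀⟩
  have hSv : 0 < ∑ i, v i * L i :=
    Finset.sum_pos (fun i _ => mul_pos (hvpos i) (hL i)) ⟨i₀, Finset.mem_univ i₀⟩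
  -- key per-term bound
  have key : ∀ i ∈ Finset.univ.erase i₀, Γmin * (v i * L i) ≤ v i₀ * L i := by
    intro i hi
    have hi' : i ≠ i₀ := (Finset.mem_erase.mp hi).1
    have hgi := hgap i hi'
    have habs : J i₀ - J i ≤ |Jhat - J i₀| + |Jhat - J i| := by
      have h0 : J i₀ - J i = -(Jhat - J i₀) + (Jhat - J i) := by ring
      rw [h0]
      calc -(Jhat - J i₀) + (Jhat - J i) ≤ |-(Jhat - J i₀)| + |Jhat - J i| :=
            add_le_add (le_abs_self _) (le_abs_self _)
        _ = |Jhat - J i₀| + |Jhat - J i| := by rw [abs_neg]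
    have hexp : Γmin * v i ≤ v i₀ := by
      rw [hΓ, hv i, hv i₀, ← Real.exp_add]
      apply Real.exp_le_exp.mpr
      have h1 : dJ - |Jhat - J i₀| ≤ |Jhat - J i| := by linarith
      nlinarith [mul_nonneg hβ.le (sub_nonneg.mpr h1)]
    calc Γmin * (v i * L i) = (Γmin * v i) * L i := by ring
      _ ≤ v i₀ * L i := mul_le_mul_of_nonneg_right hexp (hL i).le
  -- sum bound: Γmin * Σ v L ≤ v i₀ * (Γmin * L i₀ + Sother)
  have hsplitv : ∑ i, v i * L i
      = (∑ i ∈ Finset.univ.erase i₀, v i * L i) + v i₀ * L i₀ :=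
    (Finset.sum_erase_add _ _ (Finset.mem_univ i₀)).symm
  have hsplitL : ∑ i, L i = Sother + L i₀ := by
    rw [hSo]; exact (Finset.sum_erase_add _ _ (Finset.mem_univ i₀)).symm
  have hsumkey : Γmin * ∑ i ∈ Finset.univ.erase i₀, v i * L i ≤ v i₀ * Sother := by
    rw [Finset.mul_sum, hSo, Finset.mul_sum]
    exact Finset.sum_le_sum key
  have hmain : Γmin * ∑ i, v i * L i ≤ v i₀ * (Γmin * L i₀ + Sother) := by
    rw [hsplitv]; nlinarith [hsumkey]
  -- rewrite the RHS
  have hR : ((v i₀ * L i₀) / (∑ i, v i * L i)) / (L i₀ / (∑ i, L i))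
      = (v i₀ * (∑ i, L i)) / (∑ i, v i * L i) := by
    rw [div_div_div_comm, mul_div_assoc, div_self (hL i₀).ne', mul_one,
      div_div_eq_mul_div]
  rw [hR, le_div_iff₀ hSv, hsplitL]
  -- algebraic identity for 1 + δrel
  have h1δ : (1 + δrel) * (L i₀ * Γmin + Sother) = Γmin * (Sother + L i₀) := by
    rw [hδ, hS, add_mul, one_mul, div_mul_cancel₀ _ hden2.ne']
    ring
  have step : (1 + δrel) * (∑ i, v i * L i) * (Γmin * (L i₀ * Γmin + Sother))
      ≤ v i₀ * (Sother + L i₀) * (Γmin * (L i₀ * Γmin + Sother)) := by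
    calc (1 + δrel) * (∑ i, v i * L i) * (Γmin * (L i₀ * Γmin + Sother))
        = (Γmin * ∑ i, v i * L i) * ((1 + δrel) * (L i₀ * Γmin + Sother)) := by ring
      _ = (Γmin * ∑ i, v i * L i) * (Γmin * (Sother + L i₀)) := by rw [h1δ]
      _ ≤ (v i₀ * (Γmin * L i₀ + Sother)) * (Γmin * (Sother + L i₀)) := by
          apply mul_le_mul_of_nonneg_right hmain
          have := hL i₀
          positivity
      _ = v i₀ * (Sother + L i₀) * (Γmin * (L i₀ * Γmin + Sother)) := by ring
  exact le_of_mul_le_mul_right step (mul_pos hΓpos hden2)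
end

section
/- Let I be a finite type with a distinguished element i₀, let L : I → ℝ with L i > 0 for all i, let v : I → ℝ with v i > 0 for all i, and let Γ > 0 be such that v i₀ / v i ≥ Γ for every i ≠ i₀. Then ((v i₀ · L i₀)/(Σ_{i∈I} v i · L i)) / (L i₀/(Σ_{i∈I} L i)) ≥ (Σ_{i∈I} L i) / (L i₀ + (Σ_{i≠i₀} L i)/Γ). -/
/-- The central algebraic inequality of Lemma 2: lower bound on the ratio of
the value-informed posterior to the baseline posterior in terms of the uniform
lower bound Γ on the value-likelihood ratios. -/
theorem posterior_ratio_algebraic_bound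
    {I : Type*} [Fintype I] [DecidableEq I] (i₀ : I)
    (L : I → ℝ) (hL : ∀ i, 0 < L i) (v : I → ℝ) (hv : ∀ i, 0 < v i)
    (Γ : ℝ) (hΓ : 0 < Γ) (hratio : ∀ i, i ≠ i₀ → Γ ≤ v i₀ / v i) :
    (∑ i, L i) / (L i₀ + (∑ i ∈ Finset.univ.erase i₀, L i) / Γ) ≤
      ((v i₀ * L i₀) / (∑ i, v i * L i)) / (L i₀ / (∑ i, L i)) := by
  set S := ∑ i, L i with hS
  set S' := ∑ i ∈ Finset.univ.erase i₀, L i with hS'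
  set T := ∑ i, v i * L i with hT
  have hSpos : 0 < S := Finset.sum_pos (fun i _ => hL i) ⟨i₀, Finset.mem_univ i₀⟩
  have hTpos : 0 < T := Finset.sum_pos (fun i _ => mul_pos (hv i) (hL i)) ⟨i₀, Finset.mem_univ i₀⟩
  have hS'nonneg : 0 ≤ S' := Finset.sum_nonneg fun i _ => (hL i).le
  have hDpos : 0 < L i₀ + S' / Γ :=
    add_pos_of_pos_of_nonneg (hL i₀) (div_nonneg hS'nonneg hΓ.le)
  have key : T ≤ v i₀ * (L i₀ + S' / Γ) := by
    have hsplit : T = v i₀ * L i₀ + ∑ i ∈ Finset.univ.erase i₀, v i * L i := by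
      rw [hT, ← Finset.add_sum_erase _ _ (Finset.mem_univ i₀)]
    have hbound : ∑ i ∈ Finset.univ.erase i₀, v i * L i ≤ (v i₀ / Γ) * S' := by
      rw [hS', Finset.mul_sum]
      apply Finset.sum_le_sum
      intro i hi
      have hne : i ≠ i₀ := Finset.ne_of_mem_erase hi
      have h1 : Γ ≤ v i₀ / v i := hratio i hne
      have h2 : v i ≤ v i₀ / Γ := by
        rw [le_div_iff₀ hΓ]
        calc v i * Γ ≤ v i * (v i₀ / v i) := by
              exact mul_le_mul_of_nonneg_left h1 (hv i).le
          _ = v i₀ := by rw [mul_comm, div_mul_cancel₀ _ (hv i).ne']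
      exact mul_le_mul_of_nonneg_right h2 (hL i).le
    calc T = v i₀ * L i₀ + ∑ i ∈ Finset.univ.erase i₀, v i * L i := hsplit
      _ ≤ v i₀ * L i₀ + (v i₀ / Γ) * S' := by linarith
      _ = v i₀ * (L i₀ + S' / Γ) := by ring
  rw [div_div_div_eq, div_le_div_iff₀ hDpos (mul_pos hTpos (hL i₀))]
  nlinarith [mul_pos hSpos (hL i₀), mul_le_mul_of_nonneg_left key (mul_pos hSpos (hL i₀)).le]
end

section
/- Let A be a finite type, I a finite type with a distinguished element i₀, r : A → ℝ and p : A → ℝ probability vectors (nonnegative entries summing to 1), and for each i ∈ I let q i : A → ℝ be a probability vector with q i₀ = p. Let w : I → ℝ with w i ≥ 0 and Σ_{i∈I} w i = 1, and set k = (1/2)·Σ_{a∈A} |r a − p a|. Then (1/2)·Σ_{a∈A} |r a − Σ_{i∈I} w i · q i a| ≤ 1 − w i₀ + k. -/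
/-- Lemma 1: D_TV(π_C*, mixture) ≤ 1 − w i₀ + k, where k is the total
variation distance between the context-optimal policy r and the estimated
optimal source policy p. -/
theorem tv_mixture_bound_with_estimation_error
    {A I : Type*} [Fintype A] [Fintype I] (i₀ : I)
    (r p : A → ℝ)
    (hr0 : ∀ a, 0 ≤ r a) (hr1 : ∑ a, r a = 1)
    (hp0 : ∀ a, 0 ≤ p a) (hp1 : ∑ a, p a = 1)
    (q : I → A → ℝ) (hq0 : ∀ i a, 0 ≤ q i a) (hq1 : ∀ i, ∑ a, q i a = 1)
    (hqi₀ : q i₀ = p)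
    (w : I → ℝ) (hw0 : ∀ i, 0 ≤ w i) (hw1 : ∑ i, w i = 1)
    (k : ℝ) (hk : k = (1 / 2) * ∑ a, |r a - p a|) :
    (1 / 2) * ∑ a, |r a - ∑ i, w i * q i a| ≤ 1 - w i₀ + k := by
  classical
  have key : ∑ a, |p a - ∑ i, w i * q i a| ≤ 2 * (1 - w i₀) := by
    have hrw : ∀ a, p a - ∑ i, w i * q i a = ∑ i, w i * (p a - q i a) := by
      intro a
      have : ∑ i, w i * (p a - q i a) = (∑ i, w i) * p a - ∑ i, w i * q i a := by
        rw [Finset.sum_mul, ← Finset.sum_sub_distrib]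
        congr 1; ext i; ring
      rw [this, hw1]; ring
    calc ∑ a, |p a - ∑ i, w i * q i a|
        ≤ ∑ a, ∑ i, w i * |p a - q i a| := by
          apply Finset.sum_le_sum
          intro a _
          rw [hrw a]
          refine (Finset.abs_sum_le_sum_abs _ _).trans ?_
          apply Finset.sum_le_sum
          intro i _
          rw [abs_mul, abs_of_nonneg (hw0 i)]
      _ = ∑ i, w i * ∑ a, |p a - q i a| := by
          rw [Finset.sum_comm]
          congr 1; ext i; rw [Finset.mul_sum]
      _ ≤ ∑ i ∈ Finset.univ \ {i₀}, w i * 2 := by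
          rw [← Finset.sum_sdiff (Finset.subset_univ {i₀}), Finset.sum_singleton,
            hqi₀]
          simp only [sub_self, abs_zero, Finset.sum_const_zero, mul_zero, add_zero]
          apply Finset.sum_le_sum
          intro i _
          apply mul_le_mul_of_nonneg_left _ (hw0 i)
          calc ∑ a, |p a - q i a| ≤ ∑ a, (p a + q i a) := by
                apply Finset.sum_le_sum
                intro a _
                exact (abs_sub (p a) (q i a)).trans (by
                  rw [abs_of_nonneg (hp0 a), abs_of_nonneg (hq0 i a)])
            _ = 2 := by rw [Finset.sum_add_distrib, hp1, hq1]; norm_num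
      _ = 2 * (1 - w i₀) := by
          rw [← Finset.sum_mul]
          have : ∑ i ∈ Finset.univ \ {i₀}, w i = 1 - w i₀ := by
            have := Finset.sum_sdiff (Finset.subset_univ ({i₀} : Finset I)) (f := w)
            rw [Finset.sum_singleton] at this
            linarith [hw1 ▸ this]
          rw [this]; ring
  have tri : ∑ a, |r a - ∑ i, w i * q i a| ≤
      (∑ a, |r a - p a|) + ∑ a, |p a - ∑ i, w i * q i a| := by
    rw [← Finset.sum_add_distrib]
    apply Finset.sum_le_sum
    intro a _
    calc |r a - ∑ i, w i * q i a| = |(r a - p a) + (p a - ∑ i, w i * q i a)| := by ring_nf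
      _ ≤ |r a - p a| + |p a - ∑ i, w i * q i a| := abs_add_le _ _
  rw [hk]
  linarith
end

section
/- Let I be a finite type with a distinguished element i₀ and at least one other element. Let L : I → ℝ with L i > 0 for all i, J : I → ℝ, V̂ ∈ ℝ, J_C ∈ ℝ, and β > 0. Set d_V = |J_C − V̂|, d* = |J_C − J i₀|, suppose there is d_J > 0 with J i₀ − J i ≥ d_J for all i ≠ i₀, and suppose d_J − 2·d* − 2·d_V > 0. Define v̂ i = exp(−β·|V̂ − J i|). Then the estimated-value-informed posterior strictly exceeds the baseline posterior: (v̂ i₀ · L i₀)/(Σ_{i∈I} v̂ i · L i) > L i₀/(Σ_{i∈I} L i). -/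
/-- Corollary 2: under the estimated Context Value Vhat, the
estimated-value-informed posterior strictly exceeds the baseline posterior
whenever d_J − 2 d* − 2 d_V > 0. -/
theorem estimated_value_informed_posterior_gt_baseline
    {I : Type*} [Fintype I] (i₀ : I) (hI : ∃ i : I, i ≠ i₀)
    (L : I → ℝ) (hL : ∀ i, 0 < L i) (J : I → ℝ) (Vhat J_C : ℝ) (β : ℝ) (hβ : 0 < β)
    (dJ : ℝ) (hdJ : 0 < dJ) (hgap : ∀ i, i ≠ i₀ → dJ ≤ J i₀ - J i)
    (hsmall : 0 < dJ - 2 * |J_C - J i₀| - 2 * |J_C - Vhat|)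
    (vhat : I → ℝ) (hvhat : ∀ i, vhat i = Real.exp (-β * |Vhat - J i|)) :
    L i₀ / (∑ i, L i) < (vhat i₀ * L i₀) / (∑ i, vhat i * L i) := by
  have hvpos : ∀ i, 0 < vhat i := fun i => by rw [hvhat i]; exact Real.exp_pos _
  -- key: for i ≠ i₀, |Vhat - J i₀| < |Vhat - J i|
  have hkey : ∀ i, i ≠ i₀ → |Vhat - J i₀| < |Vhat - J i| := by
    intro i hi
    have h0 : |Vhat - J i₀| ≤ |J_C - Vhat| + |J_C - J i₀| := by
      have := abs_sub_abs_le_abs_sub (J_C - J i₀) (J_C - Vhat)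
      have h := abs_sub (J_C - Vhat) (J_C - J i₀)
      calc |Vhat - J i₀| = |(J_C - J i₀) - (J_C - Vhat)| := by ring_nf
        _ ≤ |J_C - Vhat| + |J_C - J i₀| := by
            have := abs_sub_le (J_C - J i₀) J_C (J_C - Vhat)
            have h2 := abs_sub (J_C - J i₀) (J_C - Vhat)
            calc |(J_C - J i₀) - (J_C - Vhat)| ≤ |J_C - J i₀| + |J_C - Vhat| :=
                  abs_sub (J_C - J i₀) (J_C - Vhat)
              _ = |J_C - Vhat| + |J_C - J i₀| := by ring
    have h1 : dJ - |Vhat - J i₀| ≤ |Vhat - J i| := by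
      have hg := hgap i hi
      have : J i₀ - J i ≤ |Vhat - J i₀| + |Vhat - J i| := by
        calc J i₀ - J i = -(Vhat - J i₀) + (Vhat - J i) := by ring
          _ ≤ |Vhat - J i₀| + |Vhat - J i| :=
            add_le_add (neg_le_abs _) (le_abs_self _)
      linarith
    linarith
  have hwlt : ∀ i, i ≠ i₀ → vhat i < vhat i₀ := by
    intro i hi
    rw [hvhat i, hvhat i₀]
    exact Real.exp_lt_exp.mpr (by nlinarith [hkey i hi])
  have hsum : (∑ i, vhat i * L i) < ∑ i, vhat i₀ * L i := by
    obtain ⟨j, hj⟩ := hI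
    apply Finset.sum_lt_sum
    · intro i _
      rcases eq_or_ne i i₀ with rfl | hi
      · exact le_rfl
      · exact mul_le_mul_of_nonneg_right (hwlt i hi).le (hL i).le
    · exact ⟨j, Finset.mem_univ j, mul_lt_mul_of_pos_right (hwlt j hj) (hL j)⟩
  have hSpos : 0 < ∑ i, L i := Finset.sum_pos (fun i _ => hL i) ⟨i₀, Finset.mem_univ i₀⟩
  have hTpos : 0 < ∑ i, vhat i * L i :=
    Finset.sum_pos (fun i _ => mul_pos (hvpos i) (hL i)) ⟨i₀, Finset.mem_univ i₀⟩
  rw [div_lt_div_iff₀ hSpos hTpos]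
  have h := mul_lt_mul_of_pos_left hsum (hL i₀)
  calc L i₀ * ∑ i, vhat i * L i < L i₀ * ∑ i, vhat i₀ * L i := h
    _ = vhat i₀ * L i₀ * ∑ i, L i := by rw [Finset.mul_sum, Finset.mul_sum]; exact Finset.sum_congr rfl fun i _ => by ring
end
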